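/- Let x : [0,∞) → ℝ³ be differentiable with x'(t) = b(x(t)) for all t ≥ 0. If ‖x(0)‖ = 1, then ‖x(t)‖ = 1 for all t ≥ 0; that is, the unit sphere S² is invariant under the flow of b. -/

import Mathlib

open scoped RealInnerProductSpace

/-- The cubic Kolmogorov vector field on `ℝ³` (modelled as `EuclideanSpace ℝ (Fin 3)`):
`b(x)₁ = x₁(α₁ − α₁x₁² − (α₁+α₂+d₁)x₂² + d₂x₃²)`,
`b(x)₂ = x₂(α₂ + d₁x₁² − α₂x₂² − (α₂+α₃+d₃)x₃²)`,
`b(x)₃ = x₃(α₃ − (α₃+α₁+d₂)x₁² + d₃x₂² − α₃x₃²)`. -/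
noncomputable def bVF (α₁ α₂ α₃ d₁ d₂ d₃ : ℝ) (x : EuclideanSpace ℝ (Fin 3)) :
    EuclideanSpace ℝ (Fin 3) :=
  (WithLp.equiv 2 (Fin 3 → ℝ)).symm
    ![x 0 * (α₁ - α₁ * (x 0)^2 - (α₁ + α₂ + d₁) * (x 1)^2 + d₂ * (x 2)^2),
      x 1 * (α₂ + d₁ * (x 0)^2 - α₂ * (x 1)^2 - (α₂ + α₃ + d₃) * (x 2)^2),
      x 2 * (α₃ - (α₃ + α₁ + d₂) * (x 0)^2 + d₃ * (x 1)^2 - α₃ * (x 2)^2)]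

/-!
The radial component of `b` factors as `⟪y, b y⟫ = q(y) (1 - ‖y‖²)` with
`q(y) = α₁y₁² + α₂y₂² + α₃y₃²`. Along a solution, `φ = ‖x‖² - 1` therefore satisfies the linear
equation `φ' = -2 q(x) φ` with `φ(0) = 0`, and Grönwall's inequality forces `φ ≡ 0`.
-/

theorem norm_eq_one_of_hasDerivAt_of_inner_eq_mul
    {E : Type*} [NormedAddCommGroup E] [InnerProductSpace ℝ E]
    {v : E → E} {q : E → ℝ} (hq : Continuous q) (hv : ∀ y, ⟪y, v y⟫ = q y * (1 - ‖y‖ ^ 2))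
    {x : ℝ → E} (hx : ∀ t, 0 ≤ t → HasDerivAt x (v (x t)) t) (h0 : ‖x 0‖ = 1) :
    ∀ t, 0 ≤ t → ‖x t‖ = 1 := by
  intro T hT
  set φ : ℝ → ℝ := fun t => ‖x t‖ ^ 2 - 1
  have hφ' : ∀ t, 0 ≤ t → HasDerivAt φ (-2 * q (x t) * φ t) t := fun t ht => by
    refine ((hx t ht).norm_sq.sub_const 1).congr_deriv ?_
    rw [hv]
    ring
  have hxc : ContinuousOn x (Set.Icc 0 T) := fun t ht => (hx t ht.1).continuousAt.continuousWithinAt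
  obtain ⟨C, hC⟩ := isCompact_Icc.exists_bound_of_continuousOn
    (continuous_const.mul hq |>.comp_continuousOn hxc)
  have hφT := eq_zero_of_abs_deriv_le_mul_abs_self_of_eq_zero_right (K := C)
    (fun t ht => (hφ' t ht.1).continuousAt.continuousWithinAt)
    (fun t ht => (hφ' t ht.1).hasDerivWithinAt) (by simp [φ, h0])
    (fun t ht => by
      rw [norm_mul]
      exact mul_le_mul_of_nonneg_right (hC t (Set.Ico_subset_Icc_self ht)) (norm_nonneg _))
    T ⟨hT, le_rfl⟩
  have : ‖x T‖ ^ 2 = 1 ^ 2 := by simpa [φ, sub_eq_zero] using hφT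
  exact (pow_left_inj₀ (norm_nonneg _) zero_le_one two_ne_zero).mp this

theorem inner_bVF (α₁ α₂ α₃ d₁ d₂ d₃ : ℝ) (y : EuclideanSpace ℝ (Fin 3)) :
    ⟪y, bVF α₁ α₂ α₃ d₁ d₂ d₃ y⟫ =
      (α₁ * y 0 ^ 2 + α₂ * y 1 ^ 2 + α₃ * y 2 ^ 2) * (1 - ‖y‖ ^ 2) := by
  simp only [bVF, EuclideanSpace.real_norm_sq_eq, PiLp.inner_apply, RCLike.inner_apply,
    conj_trivial, Fin.sum_univ_three, WithLp.equiv_symm_apply,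
    Matrix.cons_val_zero, Matrix.cons_val_one, Matrix.cons_val_two, Matrix.head_cons,
    Matrix.tail_cons]
  ring

/-- The unit sphere is invariant under the flow of `b`: a solution starting on `S²`
stays on `S²`. -/
theorem sphere_invariant (α₁ α₂ α₃ d₁ d₂ d₃ : ℝ) (x : ℝ → EuclideanSpace ℝ (Fin 3))
    (hx : ∀ t : ℝ, 0 ≤ t → HasDerivAt x (bVF α₁ α₂ α₃ d₁ d₂ d₃ (x t)) t)
    (h0 : ‖x 0‖ = 1) :
    ∀ t : ℝ, 0 ≤ t → ‖x t‖ = 1 :=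
  norm_eq_one_of_hasDerivAt_of_inner_eq_mul (by fun_prop) (inner_bVF α₁ α₂ α₃ d₁ d₂ d₃) hx h0
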